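/- For any connected graph G on at least 2 vertices, Z(G) ≤ sdim(G) + 3·r(G), where r(G) = |E(G)| − |V(G)| + 1 is the cycle rank of G. -/

import Mathlib

open SimpleGraph

/-- One step of the zero forcing color-change rule: add every white vertex that is
the unique white neighbor of some black vertex. -/
def zfStep {V : Type*} (G : SimpleGraph V) (B : Set V) : Set V :=
  B ∪ {w | ∃ u ∈ B, G.Adj u w ∧ ∀ x, G.Adj u x → x ∉ B → x = w}

/-- `S` is a zero forcing set if iterating the color-change rule blackens all vertices. -/
def IsZeroForcingSet {V : Type*} (G : SimpleGraph V) (S : Set V) : Prop :=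
  ∃ n : ℕ, (zfStep G)^[n] S = Set.univ

/-- The zero forcing number: minimum cardinality of a zero forcing set. -/
noncomputable def zeroForcingNumber {V : Type*} (G : SimpleGraph V) : ℕ :=
  sInf {n | ∃ S : Set V, S.ncard = n ∧ IsZeroForcingSet G S}

/-- A (finite) graph is a path graph: nonempty, connected, acyclic, max degree ≤ 2. -/
def IsPathGraph {V : Type*} (G : SimpleGraph V) : Prop :=
  Nonempty V ∧ G.Connected ∧ G.IsAcyclic ∧ ∀ v : V, (G.neighborSet v).ncard ≤ 2

/-- The path cover number: minimum number of vertex-disjoint induced paths covering `V`. -/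
noncomputable def pathCoverNumber {V : Type*} (G : SimpleGraph V) : ℕ :=
  sInf {n | ∃ P : Finset (Set V), P.card = n ∧
    (∀ S ∈ P, IsPathGraph (G.induce S)) ∧
    (P : Set (Set V)).PairwiseDisjoint id ∧ ⋃₀ (P : Set (Set V)) = Set.univ}

/-- `u` lies on an `x`–`v` geodesic. -/
def LiesBetween {V : Type*} (G : SimpleGraph V) (x u v : V) : Prop :=
  G.dist x u + G.dist u v = G.dist x v

/-- `x` strongly resolves the pair `u, v`. -/
def StronglyResolves {V : Type*} (G : SimpleGraph V) (x u v : V) : Prop :=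
  LiesBetween G x u v ∨ LiesBetween G x v u

/-- `W` is a strong resolving set of `G`. -/
def IsStrongResolvingSet {V : Type*} (G : SimpleGraph V) (W : Set V) : Prop :=
  ∀ u v : V, u ≠ v → ∃ x ∈ W, StronglyResolves G x u v

/-- The strong metric dimension: minimum cardinality of a strong resolving set. -/
noncomputable def sdim {V : Type*} (G : SimpleGraph V) : ℕ :=
  sInf {n | ∃ W : Set V, W.ncard = n ∧ IsStrongResolvingSet G W}

/-- A leaf is a vertex of degree one. -/
def IsLeaf {V : Type*} (G : SimpleGraph V) (v : V) : Prop :=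
  (G.neighborSet v).ncard = 1

/-- `σ(G)`: the number of leaves of `G`. -/
noncomputable def leafCount {V : Type*} (G : SimpleGraph V) : ℕ :=
  {v | IsLeaf G v}.ncard

/-!
Take a spanning tree `T` of `G` and a leaf `ρ` of `G` (any vertex if there is none). The leaves
of `G` other than `ρ`, together with the endpoints of the `r(G)` edges outside `T`, form a zero
forcing set of `G`: once the endpoints of the extra edges are black, forcing in `G` is forcing in
`T`, and in a tree rooted at `ρ` a white vertex farthest from `ρ` would be forced by one of its
children. Hence `Z(G) ≤ σ(G) - 1 + 2 r(G)`. On the other hand a strong resolving set contains all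
leaves but at most one, since a leaf lies on no geodesic between two other vertices, so
`σ(G) - 1 ≤ sdim(G)`.
-/

section

variable {V : Type*} {G T : SimpleGraph V}

lemma isZeroForcingSet_of_forall_zfStep_subset [Finite V] {S : Set V}
    (h : ∀ F, S ⊆ F → zfStep G F ⊆ F → F = Set.univ) : IsZeroForcingSet G S := by
  have hmono : Monotone fun n => (zfStep G)^[n] S := by
    refine monotone_nat_of_le_succ fun n => ?_
    rw [Function.iterate_succ_apply']
    exact Set.subset_union_left
  obtain ⟨n, hn⟩ := WellFoundedGT.monotone_chain_condition ⟨_, hmono⟩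
  refine ⟨n, h _ (hmono (Nat.zero_le n)) ?_⟩
  rw [← Function.iterate_succ_apply' (zfStep G)]
  exact (hn (n + 1) n.le_succ).ge

lemma zfStep_subset_of_le (hTG : T ≤ G) {F : Set V} (hsupp : (G \ T).support ⊆ F)
    (hF : zfStep G F ⊆ F) : zfStep T F ⊆ F := by
  rintro w (hw | ⟨u, huF, huw, hforce⟩)
  · exact hw
  refine hF (Or.inr ⟨u, huF, hTG huw, fun x hux hxF => hforce x ?_ hxF⟩)
  by_contra hTux
  exact hxF (hsupp ((sdiff_adj G T x u).2 ⟨hux.symm, fun h => hTux h.symm⟩).mem_support_left)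

lemma SimpleGraph.ncard_support_le [Finite V] (G : SimpleGraph V) :
    G.support.ncard ≤ 2 * G.edgeSet.ncard := by
  classical
  have := Fintype.ofFinite V
  have hrange : G.support = Set.range fun d : G.Dart => d.fst := by
    ext v
    exact ⟨fun ⟨w, h⟩ => ⟨⟨(v, w), h⟩, rfl⟩,
      fun ⟨d, hd⟩ => hd ▸ d.adj.mem_support_left⟩
  calc G.support.ncard ≤ Nat.card G.Dart := by
        rw [hrange, ← Nat.card_coe_set_eq]; exact Finite.card_range_le _
    _ = 2 * G.edgeSet.ncard := by
        rw [Nat.card_eq_fintype_card, dart_card_eq_twice_card_edges, edgeFinset_card,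
          ← Nat.card_eq_fintype_card, Nat.card_coe_set_eq]

lemma IsLeaf.isLeaf_or_mem_support_sdiff {v : V} (hTG : T ≤ G) (hv : IsLeaf T v) :
    IsLeaf G v ∨ v ∈ (G \ T).support := by
  refine or_iff_not_imp_right.2 fun hvsupp => ?_
  have : G.neighborSet v = T.neighborSet v := by
    ext x
    refine ⟨fun hx => ?_, fun hx => hTG hx⟩
    by_contra hTx
    exact hvsupp ((sdiff_adj G T v x).2 ⟨hx, hTx⟩).mem_support_left
  rwa [IsLeaf, this]

lemma SimpleGraph.IsAcyclic.eq_of_adj_of_dist_add_one_eq (hT : T.IsAcyclic) {ρ c u₁ u₂ : V}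
    (h₁ : T.Adj c u₁) (h₂ : T.Adj c u₂) (hd₁ : T.dist ρ u₁ + 1 = T.dist ρ c)
    (hd₂ : T.dist ρ u₂ + 1 = T.dist ρ c) : u₁ = u₂ := by
  classical
  have hρc : T.Reachable ρ c := Reachable.of_dist_ne_zero (by omega)
  obtain ⟨p, hp⟩ := hρc.exists_isPath
  suffices ∀ u, T.Adj c u → T.dist ρ u + 1 = T.dist ρ c → u = p.penultimate by
    rw [this u₁ h₁ hd₁, this u₂ h₂ hd₂]
  intro u hcu hdu
  obtain ⟨q, hq, hqlen⟩ := (hρc.trans hcu.reachable).exists_path_of_dist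
  refine hT.eq_penultimate_of_adj_end hp hcu
    (hT.mem_support_of_ne_mem_support_of_adj_of_isPath hp hq hcu fun hc => ?_)
  have := dist_le (q.takeUntil c hc)
  have := q.length_takeUntil_le_length hc
  omega

lemma SimpleGraph.IsTree.exists_adj_dist_eq_add_one (hT : T.IsTree) (ρ : V) {w a b : V}
    (ha : T.Adj w a) (hb : T.Adj w b) (hab : a ≠ b) :
    ∃ c, T.Adj w c ∧ T.dist ρ c = T.dist ρ w + 1 := by
  rcases hT.dist_eq_dist_add_one_of_adj ρ ha with hwa | hwa
  · rcases hT.dist_eq_dist_add_one_of_adj ρ hb with hwb | hwb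
    · exact absurd (hT.isAcyclic.eq_of_adj_of_dist_add_one_eq ha hb hwa.symm hwb.symm) hab
    · exact ⟨b, hb, hwb⟩
  · exact ⟨a, ha, hwa⟩

lemma SimpleGraph.IsTree.eq_univ_of_zfStep_subset [Finite V] [Nontrivial V] (hT : T.IsTree) (ρ : V)
    {F : Set V} (hleaf : ∀ v, IsLeaf T v → v ≠ ρ → v ∈ F) (hF : zfStep T F ⊆ F) :
    F = Set.univ := by
  by_contra hne
  obtain ⟨w, hwF, hwmax⟩ := Set.exists_max_image Fᶜ (T.dist ρ) (Set.toFinite _)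
    (Set.nonempty_compl.2 hne)
  obtain ⟨a, hwa⟩ :=
    T.mem_support.1 (hT.connected.preconnected.support_eq_univ ▸ Set.mem_univ w)
  obtain ⟨c, hwc, hc⟩ : ∃ c, T.Adj w c ∧ T.dist ρ c = T.dist ρ w + 1 := by
    by_cases hwρ : w = ρ
    · subst hwρ
      exact ⟨a, hwa, by rw [dist_self, dist_eq_one_iff_adj.2 hwa]⟩
    obtain ⟨b, hwb, hba⟩ := Set.exists_ne_of_one_lt_ncard (s := T.neighborSet w)
      (lt_of_le_of_ne ((Set.ncard_pos (Set.toFinite _)).2 ⟨a, hwa⟩)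
        fun h => hwF (hleaf w h.symm hwρ)) a
    exact hT.exists_adj_dist_eq_add_one ρ hwa hwb hba.symm
  have hcF : c ∈ F := by
    by_contra h
    have := hwmax c h
    omega
  -- `c` forces `w`: its other neighbours are its children, which lie beyond every white vertex
  refine hwF (hF (Or.inr ⟨c, hcF, hwc.symm, fun x hcx hxF => ?_⟩))
  have := hwmax x hxF
  rcases hT.dist_eq_dist_add_one_of_adj ρ hcx with h | h
  · exact hT.isAcyclic.eq_of_adj_of_dist_add_one_eq (ρ := ρ) hcx hwc.symm (by omega) (by omega)
  · omega

theorem zeroForcingNumber_le_of_isTree_le [Finite V] [Nontrivial V] (hT : T.IsTree)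
    (hTG : T ≤ G) : zeroForcingNumber G ≤ leafCount G - 1 + 2 * (G \ T).edgeSet.ncard := by
  set L := {v | IsLeaf G v}
  obtain ⟨ρ, hρ⟩ : ∃ ρ, L.Nonempty → ρ ∈ L := by
    by_cases h : L.Nonempty
    · exact ⟨h.some, fun _ => h.some_mem⟩
    · exact ⟨Classical.arbitrary V, fun h' => absurd h' h⟩
  have hZFS : IsZeroForcingSet G (L \ {ρ} ∪ (G \ T).support) := by
    refine isZeroForcingSet_of_forall_zfStep_subset fun F hSF hF => ?_
    have hsupp : (G \ T).support ⊆ F := Set.subset_union_right.trans hSF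
    refine hT.eq_univ_of_zfStep_subset ρ (fun v hv hvρ => ?_) (zfStep_subset_of_le hTG hsupp hF)
    rcases hv.isLeaf_or_mem_support_sdiff hTG with hv | hv
    · exact hSF (Or.inl ⟨hv, hvρ⟩)
    · exact hsupp hv
  have hL : (L \ {ρ}).ncard ≤ L.ncard - 1 := by
    rcases L.eq_empty_or_nonempty with h | h
    · simp [h]
    · rw [Set.ncard_sdiff_singleton_of_mem (hρ h)]
  calc zeroForcingNumber G ≤ (L \ {ρ} ∪ (G \ T).support).ncard :=
        Nat.sInf_le ⟨_, rfl, hZFS⟩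
    _ ≤ (L \ {ρ}).ncard + (G \ T).support.ncard := Set.ncard_union_le _ _
    _ ≤ leafCount G - 1 + 2 * (G \ T).edgeSet.ncard := add_le_add hL (G \ T).ncard_support_le

lemma SimpleGraph.dist_eq_dist_add_one_of_neighborSet_eq_singleton (hG : G.Connected) {u u' y : V}
    (hu : G.neighborSet u = {u'}) (hy : y ≠ u) : G.dist u y = G.dist u' y + 1 := by
  have huu' : G.Adj u u' := show u' ∈ G.neighborSet u by simp [hu]
  refine le_antisymm ?_ ?_
  · calc G.dist u y ≤ G.dist u u' + G.dist u' y := hG.dist_triangle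
      _ = G.dist u' y + 1 := by rw [dist_eq_one_iff_adj.2 huu', add_comm]
  · obtain ⟨p, hp⟩ := hG.exists_walk_length_eq_dist u y
    cases p with
    | nil => exact absurd rfl hy
    | cons h q =>
      obtain rfl : _ = u' := by simpa [hu] using show _ ∈ G.neighborSet u from h
      simpa [← hp] using dist_le q

lemma IsLeaf.not_liesBetween (hG : G.Connected) {x u v : V} (hu : IsLeaf G u) (hx : x ≠ u)
    (hv : v ≠ u) : ¬ LiesBetween G x u v := by
  obtain ⟨u', hu'⟩ := Set.ncard_eq_one.1 hu
  have hxu := dist_eq_dist_add_one_of_neighborSet_eq_singleton hG hu' hx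
  have huv := dist_eq_dist_add_one_of_neighborSet_eq_singleton hG hu' hv
  have := hG.dist_triangle (u := x) (v := u') (w := v)
  rw [LiesBetween, dist_comm, hxu, huv, dist_comm (u := u')]
  omega

lemma IsStrongResolvingSet.leafCount_le_ncard_add_one [Finite V] (hG : G.Connected) {W : Set V}
    (hW : IsStrongResolvingSet G W) : leafCount G ≤ W.ncard + 1 := by
  set L := {v | IsLeaf G v}
  have hLW : (L \ W).Subsingleton := by
    rintro u ⟨hu, huW⟩ v ⟨hv, hvW⟩
    by_contra huv
    obtain ⟨x, hxW, hx | hx⟩ := hW u v huv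
    · exact hu.not_liesBetween hG (ne_of_mem_of_not_mem hxW huW) (Ne.symm huv) hx
    · exact hv.not_liesBetween hG (ne_of_mem_of_not_mem hxW hvW) huv hx
  calc leafCount G ≤ (W ∪ L \ W).ncard := by
        rw [Set.union_sdiff_self]; exact Set.ncard_le_ncard Set.subset_union_right
    _ ≤ W.ncard + (L \ W).ncard := Set.ncard_union_le _ _
    _ ≤ W.ncard + 1 := by gcongr; exact Set.ncard_le_one_iff_subsingleton.2 hLW

lemma isStrongResolvingSet_univ (G : SimpleGraph V) : IsStrongResolvingSet G Set.univ :=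
  fun _ v _ => ⟨v, trivial, Or.inr (by simp [LiesBetween])⟩

lemma leafCount_le_sdim_add_one [Finite V] (hG : G.Connected) : leafCount G ≤ sdim G + 1 := by
  obtain ⟨W, hW, hres⟩ :=
    Nat.sInf_mem (s := {n | ∃ W : Set V, W.ncard = n ∧ IsStrongResolvingSet G W})
      ⟨_, Set.univ, rfl, isStrongResolvingSet_univ G⟩
  rw [sdim, ← hW]
  exact hres.leafCount_le_ncard_add_one hG

end

/-- For any connected graph `G` on at least 2 vertices,
`Z(G) ≤ sdim(G) + 3·r(G)`, where `r(G) = |E(G)| − |V(G)| + 1` is the cycle rank. -/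
theorem zeroForcingNumber_le_sdim_add_cycleRank {V : Type*} [Fintype V]
    (G : SimpleGraph V) (hG : G.Connected) (h2 : 2 ≤ Fintype.card V) :
    zeroForcingNumber G ≤ sdim G + 3 * (G.edgeSet.ncard + 1 - Fintype.card V) := by
  have : Nontrivial V := Fintype.one_lt_card_iff_nontrivial.1 h2
  obtain ⟨T, hTG, hT⟩ := hG.exists_isTree_le
  have hTcard : T.edgeSet.ncard + 1 = Fintype.card V := by
    simpa [Nat.card_coe_set_eq] using (isTree_iff_connected_and_card.1 hT).2
  have hextra : (G \ T).edgeSet.ncard = G.edgeSet.ncard - T.edgeSet.ncard := by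
    rw [edgeSet_sdiff, Set.ncard_sdiff (edgeSet_mono hTG)]
  have := zeroForcingNumber_le_of_isTree_le hT hTG
  have := leafCount_le_sdim_add_one hG
  omega
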